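/- arXiv:1403.7806 — 3 statements merged into one kernel-verified Lean document; each statement's English description precedes it below -/
import Mathlib

section
/- For all integers n ≥ 1, the central binomial coefficient satisfies 4^n / sqrt(2 * π * n) ≤ C(2n, n) ≤ 4^n / sqrt(π * n). -/
/-!
With `s n = n! / (√(2n) (n/e)^n)` the Stirling sequence, `C(2n, n) = (2n)! / n!²` becomes the
exact identity `C(2n, n) √n s(n)² = 4ⁿ s(2n)`. Since `s` decreases from `s 1 = e / √2` to its
limit `√π`, we have `√π ≤ s(2n) ≤ s(n) ≤ e / √2`, so `s(2n) / s(n)²` lies between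
`√π / (e² / 2)` and `1 / √π`; the numerical fact `e² / 2 ≤ √2 π` turns the first into `1 / √(2π)`.
-/

open Real Stirling
open scoped Nat

theorem Stirling.stirlingSeq_le_of_le {m n : ℕ} (hm : m ≠ 0) (hmn : m ≤ n) :
    stirlingSeq n ≤ stirlingSeq m := by
  obtain ⟨k, rfl⟩ := Nat.exists_eq_succ_of_ne_zero hm
  obtain ⟨l, rfl⟩ := Nat.exists_eq_add_of_le hmn
  simpa [Nat.succ_add] using stirlingSeq'_antitone (Nat.le_add_right k l)

theorem Stirling.stirlingSeq_le_exp_one_div_sqrt_two {n : ℕ} (hn : n ≠ 0) :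
    stirlingSeq n ≤ exp 1 / √2 :=
  stirlingSeq_one ▸ stirlingSeq_le_of_le one_ne_zero (Nat.one_le_iff_ne_zero.mpr hn)

theorem Nat.centralBinom_mul_sqrt_mul_stirlingSeq_sq (n : ℕ) :
    (centralBinom n : ℝ) * √n * stirlingSeq n ^ 2 = 4 ^ n * stirlingSeq (2 * n) := by
  obtain rfl | hn := eq_or_ne n 0
  · simp
  have hfac : (centralBinom n : ℝ) * n ! ^ 2 = (2 * n)! := by
    rw [centralBinom_eq_two_mul_choose, two_mul, ← add_choose_mul_factorial_mul_factorial]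
    push_cast; ring
  have hsqrt : √(2 * (2 * n : ℕ) : ℝ) = 2 * √n := by
    rw [show (2 * (2 * n : ℕ) : ℝ) = 2 ^ 2 * n by push_cast; ring, sqrt_mul' _ n.cast_nonneg,
      sqrt_sq zero_le_two]
  have hn' : (0 : ℝ) < n := by positivity
  simp only [stirlingSeq]
  rw [hsqrt, ← hfac, sqrt_mul' _ hn'.le]
  field_simp
  rw [sq_sqrt zero_le_two, show (4 : ℝ) ^ n = 2 ^ (2 * n) by rw [pow_mul]; norm_num]
  push_cast
  ring

theorem Real.exp_one_sq_div_two_le_sqrt_two_mul_pi : exp 1 ^ 2 / 2 ≤ √2 * π := by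
  have he := exp_one_lt_d9
  have hπ := pi_gt_three
  have h2 : (1.4 : ℝ) ≤ √2 := le_sqrt_of_sq_le (by norm_num)
  nlinarith [exp_pos 1]

theorem Nat.centralBinom_le_four_pow_div_sqrt_pi_mul {n : ℕ} (hn : n ≠ 0) :
    (centralBinom n : ℝ) ≤ 4 ^ n / √(π * n) := by
  have hπ : √π ≤ stirlingSeq n := sqrt_pi_le_stirlingSeq hn
  have hpos : 0 < stirlingSeq n := (Real.sqrt_pos.2 pi_pos).trans_le hπ
  have hmono : stirlingSeq (2 * n) ≤ stirlingSeq n := stirlingSeq_le_of_le hn (by omega)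
  have hbound : centralBinom n * √n * stirlingSeq n ≤ 4 ^ n := by
    refine le_of_mul_le_mul_right ?_ hpos
    calc (centralBinom n * √n * stirlingSeq n) * stirlingSeq n
        = 4 ^ n * stirlingSeq (2 * n) := by
          rw [← centralBinom_mul_sqrt_mul_stirlingSeq_sq]; ring
      _ ≤ 4 ^ n * stirlingSeq n := by gcongr
  rw [sqrt_mul pi_pos.le, le_div_iff₀ (by positivity)]
  calc (centralBinom n : ℝ) * (√π * √n) = centralBinom n * √n * √π := by ring
    _ ≤ centralBinom n * √n * stirlingSeq n := by gcongr
    _ ≤ 4 ^ n := hbound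

theorem Nat.four_pow_div_sqrt_two_mul_pi_mul_le_centralBinom {n : ℕ} (hn : n ≠ 0) :
    4 ^ n / √(2 * π * n) ≤ (centralBinom n : ℝ) := by
  have hπ : √π ≤ stirlingSeq (2 * n) := sqrt_pi_le_stirlingSeq (by omega)
  have hsq : stirlingSeq n ^ 2 ≤ exp 1 ^ 2 / 2 := by
    calc stirlingSeq n ^ 2 ≤ (exp 1 / √2) ^ 2 := by
          gcongr
          · exact (Real.sqrt_pos.2 pi_pos).le.trans (sqrt_pi_le_stirlingSeq hn)
          · exact stirlingSeq_le_exp_one_div_sqrt_two hn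
      _ = exp 1 ^ 2 / 2 := by rw [div_pow, sq_sqrt zero_le_two]
  have hbound : 4 ^ n * √π ≤ centralBinom n * (√(2 * π) * √n) * √π := by
    calc 4 ^ n * √π ≤ 4 ^ n * stirlingSeq (2 * n) := by gcongr
      _ = centralBinom n * √n * stirlingSeq n ^ 2 :=
          (centralBinom_mul_sqrt_mul_stirlingSeq_sq n).symm
      _ ≤ centralBinom n * √n * (√2 * π) := by
          gcongr
          exact hsq.trans exp_one_sq_div_two_le_sqrt_two_mul_pi
      _ = centralBinom n * (√(2 * π) * √n) * √π := by
          rw [sqrt_mul zero_le_two]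
          linear_combination (-(centralBinom n * √n * √2 : ℝ)) * mul_self_sqrt pi_pos.le
  rw [sqrt_mul (by positivity), div_le_iff₀ (by positivity)]
  exact le_of_mul_le_mul_right hbound (Real.sqrt_pos.2 pi_pos)

theorem central_binom_robbins (n : ℕ) (hn : 1 ≤ n) :
    (4 : ℝ) ^ n / Real.sqrt (2 * Real.pi * n) ≤ ((2 * n).choose n : ℝ) ∧
    ((2 * n).choose n : ℝ) ≤ (4 : ℝ) ^ n / Real.sqrt (Real.pi * n) := by
  have hn₀ : n ≠ 0 := Nat.one_le_iff_ne_zero.mp hn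
  rw [← Nat.centralBinom_eq_two_mul_choose]
  exact ⟨Nat.four_pow_div_sqrt_two_mul_pi_mul_le_centralBinom hn₀,
    Nat.centralBinom_le_four_pow_div_sqrt_pi_mul hn₀⟩
end

section
/- Let n be even, let a be even with 1 ≤ a ≤ n/2, and define p_a = C(n-a, (n-a)/2) * C(a, a/2) / C(n, n/2). Then there exist positive constants c₁, c₂ (independent of n and a) such that c₁/sqrt(a) ≤ p_a ≤ c₂/sqrt(a). -/
/-! With `n = 2(k + b)` and `a = 2b` the ratio is `C(2k,k) C(2b,b) / C(2(k+b),k+b)`.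
The elementary Wallis-type bounds `16^m / (4m) ≤ C(2m,m)^2 ≤ 16^m / (2m+1)` make the powers of 16
cancel, leaving a ratio of polynomial factors whose square lies between `1/(8b)` and `2/b`
as soon as `1 ≤ b ≤ k`. -/

namespace Nat

theorem centralBinom_sq_mul_le_sixteen_pow (n : ℕ) :
    centralBinom n ^ 2 * (2 * n + 1) ≤ 16 ^ n := by
  induction n with
  | zero => simp
  | succ n ih =>
    have hstep : ((n + 1) * centralBinom (n + 1)) ^ 2 = (2 * (2 * n + 1) * centralBinom n) ^ 2 := by
      rw [succ_mul_centralBinom_succ]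
    refine Nat.le_of_mul_le_mul_left ?_ (show 0 < (n + 1) ^ 2 by positivity)
    calc (n + 1) ^ 2 * (centralBinom (n + 1) ^ 2 * (2 * (n + 1) + 1))
        = (2 * n + 3) * ((n + 1) * centralBinom (n + 1)) ^ 2 := by ring
      _ = 4 * (2 * n + 1) * (2 * n + 3) * (centralBinom n ^ 2 * (2 * n + 1)) := by
          rw [hstep]; ring
      _ ≤ 4 * (2 * n + 1) * (2 * n + 3) * 16 ^ n := Nat.mul_le_mul_left _ ih
      _ ≤ 16 * (n + 1) ^ 2 * 16 ^ n := Nat.mul_le_mul_right _ (by nlinarith)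
      _ = (n + 1) ^ 2 * 16 ^ (n + 1) := by ring

theorem sixteen_pow_le_centralBinom_sq_mul {n : ℕ} (hn : 0 < n) :
    16 ^ n ≤ centralBinom n ^ 2 * (4 * n) := by
  induction n, hn using Nat.le_induction with
  | base => decide
  | succ n hn ih =>
    have hstep : ((n + 1) * centralBinom (n + 1)) ^ 2 = (2 * (2 * n + 1) * centralBinom n) ^ 2 := by
      rw [succ_mul_centralBinom_succ]
    refine Nat.le_of_mul_le_mul_left ?_ (show 0 < (n + 1) ^ 2 by positivity)
    calc (n + 1) ^ 2 * 16 ^ (n + 1)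
        = 16 * (n + 1) ^ 2 * 16 ^ n := by ring
      _ ≤ 16 * (n + 1) ^ 2 * (centralBinom n ^ 2 * (4 * n)) := Nat.mul_le_mul_left _ ih
      _ ≤ 16 * (n + 1) * (2 * n + 1) ^ 2 * centralBinom n ^ 2 := by
          rw [show 16 * (n + 1) ^ 2 * (centralBinom n ^ 2 * (4 * n))
              = 16 * (n + 1) * (4 * n * (n + 1)) * centralBinom n ^ 2 by ring]
          gcongr
          nlinarith
      _ = (n + 1) ^ 2 * (centralBinom (n + 1) ^ 2 * (4 * (n + 1))) := by
          rw [show (n + 1) ^ 2 * (centralBinom (n + 1) ^ 2 * (4 * (n + 1)))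
              = 4 * (n + 1) * ((n + 1) * centralBinom (n + 1)) ^ 2 by ring, hstep]
          ring

theorem centralBinom_mul_sq_mul_le {k b : ℕ} (hbk : b ≤ k) :
    (centralBinom k * centralBinom b) ^ 2 * b ≤ 2 * centralBinom (k + b) ^ 2 := by
  rcases Nat.eq_zero_or_pos b with rfl | hb
  · simp
  have hk := centralBinom_sq_mul_le_sixteen_pow k
  have hb' := centralBinom_sq_mul_le_sixteen_pow b
  have hkb := sixteen_pow_le_centralBinom_sq_mul (show 0 < k + b by omega)
  refine Nat.le_of_mul_le_mul_right ?_ (show 0 < (2 * k + 1) * (2 * b + 1) by positivity)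
  calc (centralBinom k * centralBinom b) ^ 2 * b * ((2 * k + 1) * (2 * b + 1))
      = b * ((centralBinom k ^ 2 * (2 * k + 1)) * (centralBinom b ^ 2 * (2 * b + 1))) := by ring
    _ ≤ b * (16 ^ k * 16 ^ b) := by gcongr
    _ = b * 16 ^ (k + b) := by rw [pow_add]
    _ ≤ b * (centralBinom (k + b) ^ 2 * (4 * (k + b))) := by gcongr
    _ = 4 * b * (k + b) * centralBinom (k + b) ^ 2 := by ring
    _ ≤ 2 * ((2 * k + 1) * (2 * b + 1)) * centralBinom (k + b) ^ 2 :=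
        Nat.mul_le_mul_right _ (by nlinarith)
    _ = 2 * centralBinom (k + b) ^ 2 * ((2 * k + 1) * (2 * b + 1)) := by ring

theorem centralBinom_add_sq_le {k b : ℕ} (hk : 0 < k) (hb : 0 < b) :
    centralBinom (k + b) ^ 2 ≤ 8 * b * (centralBinom k * centralBinom b) ^ 2 := by
  have hk' := sixteen_pow_le_centralBinom_sq_mul hk
  have hb' := sixteen_pow_le_centralBinom_sq_mul hb
  have hkb := centralBinom_sq_mul_le_sixteen_pow (k + b)
  refine Nat.le_of_mul_le_mul_right ?_ (show 0 < 2 * (k + b) + 1 by omega)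
  calc centralBinom (k + b) ^ 2 * (2 * (k + b) + 1)
      ≤ 16 ^ k * 16 ^ b := by rwa [← pow_add]
    _ ≤ (centralBinom k ^ 2 * (4 * k)) * (centralBinom b ^ 2 * (4 * b)) := by gcongr
    _ = 8 * b * (centralBinom k * centralBinom b) ^ 2 * (2 * k) := by ring
    _ ≤ 8 * b * (centralBinom k * centralBinom b) ^ 2 * (2 * (k + b) + 1) := by gcongr; omega

theorem choose_div_two_eq_centralBinom {n : ℕ} (hn : Even n) :
    n.choose (n / 2) = centralBinom (n / 2) := by
  rw [centralBinom_eq_two_mul_choose, two_mul_div_two_of_even hn]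

end Nat

open Nat in
theorem one_half_div_sqrt_le_centralBinom_mul_div {k b : ℕ} (hk : 0 < k) (hb : 0 < b) :
    1 / 2 / √(2 * b) ≤ (centralBinom k * centralBinom b / centralBinom (k + b) : ℝ) := by
  have h : (centralBinom (k + b) : ℝ) ^ 2 ≤ 8 * b * (centralBinom k * centralBinom b) ^ 2 := by
    exact_mod_cast centralBinom_add_sq_le hk hb
  have hb' : (0 : ℝ) < b := by exact_mod_cast hb
  have hc : (0 : ℝ) < centralBinom (k + b) := by exact_mod_cast centralBinom_pos _
  rw [← pow_le_pow_iff_left₀ (by positivity) (by positivity) two_ne_zero, div_pow, div_pow,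
    div_pow, Real.sq_sqrt (by positivity), div_le_div_iff₀ (by positivity) (by positivity)]
  linarith

open Nat in
theorem centralBinom_mul_div_le_two_div_sqrt {k b : ℕ} (hb : 0 < b) (hbk : b ≤ k) :
    (centralBinom k * centralBinom b / centralBinom (k + b) : ℝ) ≤ 2 / √(2 * b) := by
  have h : ((centralBinom k * centralBinom b) ^ 2 * b : ℝ) ≤ 2 * centralBinom (k + b) ^ 2 := by
    exact_mod_cast centralBinom_mul_sq_mul_le hbk
  have hb' : (0 : ℝ) < b := by exact_mod_cast hb
  have hc : (0 : ℝ) < centralBinom (k + b) := by exact_mod_cast centralBinom_pos _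
  rw [← pow_le_pow_iff_left₀ (by positivity) (by positivity) two_ne_zero, div_pow, div_pow,
    Real.sq_sqrt (by positivity), div_le_div_iff₀ (by positivity) (by positivity)]
  linarith

theorem pa_theta_inv_sqrt :
    ∃ c₁ c₂ : ℝ, 0 < c₁ ∧ 0 < c₂ ∧
      ∀ n a : ℕ, Even n → Even a → 1 ≤ a → a ≤ n / 2 →
        c₁ / Real.sqrt a ≤
            ((n - a).choose ((n - a) / 2) : ℝ) * (a.choose (a / 2)) / (n.choose (n / 2)) ∧
        ((n - a).choose ((n - a) / 2) : ℝ) * (a.choose (a / 2)) / (n.choose (n / 2)) ≤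
            c₂ / Real.sqrt a := by
  refine ⟨1 / 2, 2, by norm_num, by norm_num, fun n a hn ha ha1 han => ?_⟩
  rw [Nat.choose_div_two_eq_centralBinom hn, Nat.choose_div_two_eq_centralBinom ha,
    Nat.choose_div_two_eq_centralBinom (hn.tsub ha)]
  have hn2 := Nat.even_iff.mp hn
  have ha2 := Nat.even_iff.mp ha
  have hsplit : n / 2 = (n - a) / 2 + a / 2 := by omega
  have ha_cast : (a : ℝ) = 2 * (a / 2 : ℕ) := by
    exact_mod_cast (Nat.two_mul_div_two_of_even ha).symm
  rw [hsplit, ha_cast]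
  exact ⟨one_half_div_sqrt_le_centralBinom_mul_div (by omega) (by omega),
    centralBinom_mul_div_le_two_div_sqrt (by omega) (by omega)⟩
end

section
/- Let X₁, ..., Xₙ be {0,1}-valued random variables such that for all subsets S ⊆ [n], P(∀ i ∈ S, Xᵢ = 1) ≤ ∏_{i ∈ S} P(Xᵢ = 1), and let X = Σᵢ Xᵢ. Then for all d > 0, P(X ≥ E[X] + d) ≤ exp(-2d²/n). -/
/-!
Write `Σ = X₁ + ⋯ + Xₙ`. For `t ≥ 0` and `c = eᵗ - 1 ≥ 0`, a `{0,1}`-valued `Xᵢ` satisfies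
`e^{t Xᵢ} = 1 + c Xᵢ`, so `e^{tΣ} = ∏ᵢ (1 + c Xᵢ) = ∑_S c^{|S|} ∏_{i∈S} Xᵢ`. All coefficients are
nonnegative, so negative correlation bounds the expectation termwise by `∑_S c^{|S|} ∏_{i∈S} E Xᵢ
= ∏ᵢ E e^{t Xᵢ}`: the moment generating function of `Σ` is dominated by the one in the independent
case. Hoeffding's lemma bounds each factor by `exp (t E Xᵢ + t²/8)`, and Markov's inequality
for `e^{tΣ}` at `t = 4d/n` gives the tail bound.
-/

open MeasureTheory ProbabilityTheory Real Finset

section ZeroOneValued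

variable {Ω ι : Type*} {X : ι → Ω → ℝ}

lemma exp_mul_eq_one_add_of_eq_zero_or_eq_one {x : ℝ} (hx : x = 0 ∨ x = 1) (t : ℝ) :
    exp (t * x) = 1 + (exp t - 1) * x := by
  rcases hx with rfl | rfl <;> simp

lemma prod_eq_indicator_of_eq_zero_or_eq_one (hval : ∀ i ω, X i ω = 0 ∨ X i ω = 1)
    (S : Finset ι) : (fun ω ↦ ∏ i ∈ S, X i ω) = {ω | ∀ i ∈ S, X i ω = 1}.indicator 1 := by
  ext ω
  simp only [Set.indicator_apply, Set.mem_ofPred_eq, Pi.one_apply]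
  split_ifs with h
  · exact prod_eq_one h
  · push Not at h
    obtain ⟨i, hi, hne⟩ := h
    exact prod_eq_zero hi ((hval i ω).resolve_right hne)

variable [MeasurableSpace Ω] {μ : Measure Ω}

lemma measurableSet_forall_eq_one (hmeas : ∀ i, Measurable (X i)) (S : Finset ι) :
    MeasurableSet {ω | ∀ i ∈ S, X i ω = 1} := by
  simp only [Set.ofPred_forall]
  exact .biInter S.countable_toSet fun i _ ↦ hmeas i (measurableSet_singleton 1)

lemma integral_prod_eq_measureReal (hmeas : ∀ i, Measurable (X i))
    (hval : ∀ i ω, X i ω = 0 ∨ X i ω = 1) (S : Finset ι) :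
    ∫ ω, ∏ i ∈ S, X i ω ∂μ = μ.real {ω | ∀ i ∈ S, X i ω = 1} := by
  rw [prod_eq_indicator_of_eq_zero_or_eq_one hval, integral_indicator_one
    (measurableSet_forall_eq_one hmeas S)]

lemma integrable_prod_of_eq_zero_or_eq_one [IsFiniteMeasure μ] (hmeas : ∀ i, Measurable (X i))
    (hval : ∀ i ω, X i ω = 0 ∨ X i ω = 1) (S : Finset ι) :
    Integrable (fun ω ↦ ∏ i ∈ S, X i ω) μ := by
  rw [prod_eq_indicator_of_eq_zero_or_eq_one hval]
  exact (integrable_const 1).indicator (measurableSet_forall_eq_one hmeas S)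

lemma integral_prod_le_prod_integral [IsFiniteMeasure μ] (hmeas : ∀ i, Measurable (X i))
    (hval : ∀ i ω, X i ω = 0 ∨ X i ω = 1) {S : Finset ι}
    (hneg : μ {ω | ∀ i ∈ S, X i ω = 1} ≤ ∏ i ∈ S, μ {ω | X i ω = 1}) :
    ∫ ω, ∏ i ∈ S, X i ω ∂μ ≤ ∏ i ∈ S, ∫ ω, X i ω ∂μ := by
  have h_single (i : ι) : ∫ ω, X i ω ∂μ = μ.real {ω | X i ω = 1} := by
    simpa using integral_prod_eq_measureReal (μ := μ) hmeas hval {i}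
  rw [integral_prod_eq_measureReal hmeas hval]
  simp_rw [h_single, measureReal_def, ← ENNReal.toReal_prod]
  exact ENNReal.toReal_mono (ENNReal.prod_ne_top fun i _ ↦ measure_ne_top μ _) hneg

lemma mgf_sum_le_prod_mgf [Fintype ι] [IsProbabilityMeasure μ] (hmeas : ∀ i, Measurable (X i))
    (hval : ∀ i ω, X i ω = 0 ∨ X i ω = 1)
    (hneg : ∀ S : Finset ι, μ {ω | ∀ i ∈ S, X i ω = 1} ≤ ∏ i ∈ S, μ {ω | X i ω = 1})
    {t : ℝ} (ht : 0 ≤ t) :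
    mgf (fun ω ↦ ∑ i, X i ω) μ t ≤ ∏ i, mgf (X i) μ t := by
  have hc : 0 ≤ exp t - 1 := sub_nonneg.2 (one_le_exp ht)
  have h_expand (ω : Ω) :
      exp (t * ∑ i, X i ω) = ∑ S ∈ univ.powerset, (exp t - 1) ^ #S * ∏ i ∈ S, X i ω := by
    simp_rw [mul_sum, exp_sum, exp_mul_eq_one_add_of_eq_zero_or_eq_one (hval _ ω), prod_one_add,
      prod_mul_distrib, prod_const]
  have h_mgf (i : ι) : mgf (X i) μ t = 1 + (exp t - 1) * ∫ ω, X i ω ∂μ := by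
    have hint : Integrable (X i) μ := by
      simpa using integrable_prod_of_eq_zero_or_eq_one (μ := μ) hmeas hval {i}
    simp_rw [mgf, exp_mul_eq_one_add_of_eq_zero_or_eq_one (hval i _)]
    rw [integral_add (integrable_const 1) (hint.const_mul _), integral_const_mul]
    simp
  calc mgf (fun ω ↦ ∑ i, X i ω) μ t
      = ∑ S ∈ univ.powerset, (exp t - 1) ^ #S * ∫ ω, ∏ i ∈ S, X i ω ∂μ := by
        simp_rw [mgf, h_expand, ← integral_const_mul]
        exact integral_finsetSum _ fun S _ ↦
          (integrable_prod_of_eq_zero_or_eq_one hmeas hval S).const_mul _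
    _ ≤ ∑ S ∈ univ.powerset, (exp t - 1) ^ #S * ∏ i ∈ S, ∫ ω, X i ω ∂μ := by
        gcongr with S
        exact integral_prod_le_prod_integral hmeas hval (hneg S)
    _ = ∏ i, mgf (X i) μ t := by
        simp_rw [h_mgf, prod_one_add, prod_mul_distrib, prod_const]

end ZeroOneValued

section Chernoff

variable {Ω : Type*} [MeasurableSpace Ω] {μ : Measure Ω} [IsProbabilityMeasure μ] {Y : Ω → ℝ}

lemma mgf_le_exp_mul_integral_add_of_mem_Icc {a b : ℝ} (hm : AEMeasurable Y μ)
    (hb : ∀ᵐ ω ∂μ, Y ω ∈ Set.Icc a b) (t : ℝ) :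
    mgf Y μ t ≤ exp (t * μ[Y] + (b - a) ^ 2 * t ^ 2 / 8) := by
  have h_center : mgf Y μ t = exp (t * μ[Y]) * mgf (fun ω ↦ Y ω - μ[Y]) μ t := by
    rw [← mgf_const_add]
    simp
  rw [h_center, exp_add]
  gcongr
  refine ((hasSubgaussianMGF_of_mem_Icc hm hb).mgf_le t).trans_eq ?_
  simp only [NNReal.coe_pow, NNReal.coe_div, coe_nnnorm, norm_eq_abs, div_pow, sq_abs,
    NNReal.coe_ofNat]
  ring_nf

lemma measureReal_ge_add_le_of_mgf_le {m v d : ℝ} (hv : 0 ≤ v) (hd : 0 ≤ d)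
    (h_int : ∀ t, Integrable (fun ω ↦ exp (t * Y ω)) μ)
    (h_mgf : ∀ t, 0 ≤ t → mgf Y μ t ≤ exp (t * m + v * t ^ 2 / 8)) :
    μ.real {ω | m + d ≤ Y ω} ≤ exp (-2 * d ^ 2 / v) := by
  rcases hv.eq_or_lt with rfl | hv
  · simp -- `d ^ 2 / 0 = 0`, so the bound is `1`.
  -- `t = 4d/v` minimises the Chernoff exponent `-t d + v t² / 8`.
  set t := 4 * d / v with ht_def
  have ht : 0 ≤ t := by positivity
  calc μ.real {ω | m + d ≤ Y ω} ≤ exp (-t * (m + d)) * mgf Y μ t :=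
        measure_ge_le_exp_mul_mgf _ ht (h_int t)
    _ ≤ exp (-t * (m + d)) * exp (t * m + v * t ^ 2 / 8) := by gcongr; exact h_mgf t ht
    _ = exp (-2 * d ^ 2 / v) := by
        rw [← exp_add]
        congr 1
        rw [ht_def]
        field_simp
        ring

end Chernoff

theorem chernoff_negatively_correlated_general
    {Ω : Type*} [MeasurableSpace Ω] (μ : Measure Ω) [IsProbabilityMeasure μ]
    (n : ℕ) (X : Fin n → Ω → ℝ)
    (hmeas : ∀ i, Measurable (X i))
    (hval : ∀ i ω, X i ω = 0 ∨ X i ω = 1)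
    (hneg : ∀ S : Finset (Fin n),
      μ {ω | ∀ i ∈ S, X i ω = 1} ≤ ∏ i ∈ S, μ {ω | X i ω = 1}) :
    ∀ d : ℝ, 0 < d →
      μ {ω | (∫ ω', ∑ i, X i ω' ∂μ) + d ≤ ∑ i, X i ω} ≤
        ENNReal.ofReal (Real.exp (-2 * d ^ 2 / n)) := by
  intro d hd
  have hX_Icc (i : Fin n) (ω : Ω) : X i ω ∈ Set.Icc (0 : ℝ) 1 := by
    rcases hval i ω with h | h <;> simp [h]
  have hsum_Icc (ω : Ω) : ∑ i, X i ω ∈ Set.Icc (0 : ℝ) n :=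
    ⟨sum_nonneg fun i _ ↦ (hX_Icc i ω).1,
      by simpa using sum_le_sum fun i (_ : i ∈ univ) ↦ (hX_Icc i ω).2⟩
  have h_mgf (t : ℝ) (ht : 0 ≤ t) : mgf (fun ω ↦ ∑ i, X i ω) μ t ≤
      exp (t * ∫ ω, ∑ i, X i ω ∂μ + n * t ^ 2 / 8) := by
    calc mgf (fun ω ↦ ∑ i, X i ω) μ t
        ≤ ∏ i, mgf (X i) μ t := mgf_sum_le_prod_mgf hmeas hval hneg ht
      _ ≤ ∏ i, exp (t * μ[X i] + (1 - 0) ^ 2 * t ^ 2 / 8) := by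
          gcongr with i
          · exact fun _ _ ↦ mgf_nonneg
          · exact mgf_le_exp_mul_integral_add_of_mem_Icc (hmeas i).aemeasurable
              (ae_of_all _ (hX_Icc i)) t
      _ = exp (t * ∫ ω, ∑ i, X i ω ∂μ + n * t ^ 2 / 8) := by
          rw [← exp_sum, integral_finsetSum _ fun i _ ↦
            Integrable.of_mem_Icc 0 1 (hmeas i).aemeasurable (ae_of_all _ (hX_Icc i)),
            sum_add_distrib, mul_sum, sum_const, card_univ, Fintype.card_fin, nsmul_eq_mul]
          congr 1
          ring
  rw [← ofReal_measureReal]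
  exact ENNReal.ofReal_le_ofReal (measureReal_ge_add_le_of_mgf_le n.cast_nonneg hd.le
    (fun t ↦ integrable_exp_mul_of_mem_Icc (by fun_prop) (ae_of_all _ hsum_Icc)) h_mgf)

theorem chernoff_negatively_correlated
    {Ω : Type*} [MeasurableSpace Ω] (μ : Measure Ω) [IsProbabilityMeasure μ]
    (n : ℕ) (hn : 1 ≤ n) (X : Fin n → Ω → ℝ)
    (hmeas : ∀ i, Measurable (X i))
    (hval : ∀ i ω, X i ω = 0 ∨ X i ω = 1)
    (hneg : ∀ S : Finset (Fin n),
      μ {ω | ∀ i ∈ S, X i ω = 1} ≤ ∏ i ∈ S, μ {ω | X i ω = 1}) :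
    ∀ d : ℝ, 0 < d →
      μ {ω | (∫ ω', ∑ i, X i ω' ∂μ) + d ≤ ∑ i, X i ω} ≤
        ENNReal.ofReal (Real.exp (-2 * d ^ 2 / n)) :=
  chernoff_negatively_correlated_general μ n X hmeas hval hneg
end
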